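/- Let N ≥ 1, let A ⊆ ℝ^N be not relatively compact (equivalently, unbounded), and let α : [0, ∞) → [1, ∞) be a continuous increasing function. Then there exists a function w : ℝ^N → ℝ that is infinitely differentiable on ℝ^N, belongs to L^p(ℝ^N) for every real p ∈ [1, ∞), and has growth α through A, i.e. limsup_{x ∈ A, ‖x‖ → ∞} |w(x)| / α(‖x‖) = +∞ (explicitly: for every C > 0 and every R > 0 there exists x ∈ A with ‖x‖ > R and |w(x)| > C · α(‖x‖)). -/

import Mathlib

open MeasureTheory Filter Topology

noncomputable section

/-- Euclidean space `ℝ^N`. -/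
abbrev RN (N : ℕ) := EuclideanSpace ℝ (Fin N)

/-- The space `X = C^∞(ℝ^N) ∩ ⋂_{p ∈ [1,∞)} L^p(ℝ^N)` of infinitely differentiable
functions that are `p`-integrable for every real `p ≥ 1`. -/
def SmoothIntegrable (N : ℕ) : Set (RN N → ℝ) :=
  {f | ContDiff ℝ (⊤ : ℕ∞) f ∧
       ∀ p : ℝ, 1 ≤ p → MemLp f (ENNReal.ofReal p) volume}

/-- `f` is unbounded on `A`, i.e. `sup_{x ∈ A} |f x| = +∞`. -/
def UnboundedOn {N : ℕ} (A : Set (RN N)) (f : RN N → ℝ) : Prop :=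
  ∀ C : ℝ, ∃ x ∈ A, C < |f x|

/-- `nBC∞I(A) = {f ∈ X : f is unbounded on A}`. -/
def nBCI {N : ℕ} (A : Set (RN N)) : Set (RN N → ℝ) :=
  {f | f ∈ SmoothIntegrable N ∧ UnboundedOn A f}

/-- `f` has growth `α` through `A`:
`limsup_{x ∈ A, ‖x‖ → ∞} |f x| / α ‖x‖ = +∞`. -/
def HasGrowth {N : ℕ} (A : Set (RN N)) (α : ℝ → ℝ) (f : RN N → ℝ) : Prop :=
  ∀ C : ℝ, 0 < C → ∀ R : ℝ, 0 < R → ∃ x ∈ A, R < ‖x‖ ∧ C * α ‖x‖ < |f x|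

/-! Pick points `x n ∈ A` that are `2`-separated with `‖x n‖ → ∞`, and place at `x n` a smooth
bump of height `(n + 1) * α ‖x n‖` whose support is a ball so small that
`(|height| + 1) ^ n * vol (ball) ≤ 2⁻¹ ^ n`. The supports are disjoint and locally finite, so the
sum `w` is smooth; for `n ≥ p` the `n`-th bump contributes at most `2⁻¹ ^ n` to `∫ |w| ^ p`, so
`w ∈ Lᵖ` for every finite `p`; and `|w (x n)| / α ‖x n‖ = n + 1 → ∞`. -/

open Bornology Function Metric Set
open scoped ENNReal

lemma exists_seq_mem_pairwise_lt_dist_tendsto_norm {E : Type*} [SeminormedAddCommGroup E]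
    {A : Set E} (hA : ¬IsBounded A) {d : ℝ} (hd : 0 < d) :
    ∃ x : ℕ → E, (∀ n, x n ∈ A) ∧ Pairwise (fun m n => d < dist (x m) (x n)) ∧
      Tendsto (fun n => ‖x n‖) atTop atTop := by
  have hfar : ∀ R, ∃ a ∈ A, R < ‖a‖ := by
    intro R
    by_contra! h
    exact hA (isBounded_iff_forall_norm_le.2 ⟨R, h⟩)
  choose y hyA hy using hfar
  let x : ℕ → E := fun n => Nat.rec (y 0) (fun _ a => y (‖a‖ + d)) n
  have hstep (n : ℕ) : ‖x n‖ + d < ‖x (n + 1)‖ := hy _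
  have hmono : StrictMono fun n : ℕ => ‖x n‖ - d * n :=
    strictMono_nat_of_lt_succ fun n => by push_cast; linarith [hstep n]
  have hgap {m n : ℕ} (hmn : m < n) : d < dist (x m) (x n) := by
    have hmn' : (m : ℝ) + 1 ≤ n := by exact_mod_cast hmn
    have := hmono hmn
    have := norm_sub_norm_le (x n) (x m)
    rw [dist_eq_norm']
    nlinarith
  refine ⟨x, fun n => by cases n <;> exact hyA _, fun m n hmn => ?_, ?_⟩
  · rcases hmn.lt_or_gt with h | h
    · exact hgap h
    · exact dist_comm (x m) (x n) ▸ hgap h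
  · refine tendsto_atTop_mono (fun n => ?_) (tendsto_natCast_atTop_atTop.const_mul_atTop hd)
    have h0 := hmono.monotone (Nat.zero_le n)
    simp only [Nat.cast_zero, mul_zero, sub_zero] at h0
    linarith [norm_nonneg (x 0)]

lemma locallyFinite_ball_half_of_pairwise_disjoint {ι X : Type*} [PseudoMetricSpace X]
    {x : ι → X} {ε : ℝ} (hε : 0 < ε) (hx : Pairwise (Disjoint on fun i => ball (x i) ε)) :
    LocallyFinite fun i => ball (x i) (ε / 2) := by
  intro y
  refine ⟨ball y (ε / 2), ball_mem_nhds y (half_pos hε), Subsingleton.finite ?_⟩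
  have hmem {i : ι} (hi : (ball (x i) (ε / 2) ∩ ball y (ε / 2)).Nonempty) : y ∈ ball (x i) ε := by
    obtain ⟨z, hzi, hzy⟩ := hi
    rw [mem_ball] at *
    linarith [dist_triangle_left y (x i) z]
  intro i hi j hj
  by_contra hij
  exact Set.disjoint_left.1 (hx hij) (hmem hi) (hmem hj)

lemma tsum_ne_top_of_eventually_le {f g : ℕ → ℝ≥0∞} (hf : ∀ n, f n ≠ ∞) (hfg : f ≤ᶠ[atTop] g)
    (hg : ∑' n, g n ≠ ∞) : ∑' n, f n ≠ ∞ := by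
  obtain ⟨k, hk⟩ := eventually_atTop.1 hfg
  rw [← ENNReal.summable.sum_add_tsum_nat_add' (k := k)]
  refine ENNReal.add_ne_top.2 ⟨ENNReal.sum_ne_top.2 fun n _ => hf n, ne_top_of_le_ne_top hg ?_⟩
  calc ∑' n, f (n + k) ≤ ∑' n, g (n + k) := ENNReal.tsum_le_tsum fun n => hk _ (Nat.le_add_left k n)
    _ ≤ ∑' n, g n := ENNReal.tsum_comp_le_tsum_of_injective (add_left_injective k) g

lemma tsum_rpow_mul_ne_top {a m g : ℕ → ℝ≥0∞} (ha : ∀ n, 1 ≤ a n) (ha_top : ∀ n, a n ≠ ∞)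
    (hamg : ∀ n, a n ^ n * m n ≤ g n) (hg : ∑' n, g n ≠ ∞) {p : ℝ} (hp : 0 ≤ p) :
    ∑' n, a n ^ p * m n ≠ ∞ := by
  have hm (n : ℕ) : m n ≠ ∞ :=
    ne_top_of_le_ne_top hg ((le_mul_of_one_le_left' (one_le_pow₀ (ha n))).trans
      ((hamg n).trans (ENNReal.le_tsum n)))
  refine tsum_ne_top_of_eventually_le
    (fun n => ENNReal.mul_ne_top (ENNReal.rpow_ne_top_of_nonneg hp (ha_top n)) (hm n)) ?_ hg
  filter_upwards [eventually_ge_atTop ⌈p⌉₊] with n hn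
  calc a n ^ p * m n ≤ a n ^ (n : ℝ) * m n := by
        gcongr
        · exact ha n
        · exact (Nat.le_ceil p).trans (Nat.cast_le.2 hn)
    _ = a n ^ n * m n := by rw [ENNReal.rpow_natCast]
    _ ≤ g n := hamg n

lemma enorm_mul_contDiffBump_rpow_le {E : Type*} [NormedAddCommGroup E] [NormedSpace ℝ E]
    [HasContDiffBump E] {y : E} (φ : ContDiffBump y) (a : ℝ) {p : ℝ} (hp : 0 < p) (z : E) :
    ‖a * φ z‖ₑ ^ p ≤ (closedBall y φ.rOut).indicator (fun _ => ‖a‖ₑ ^ p) z := by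
  by_cases hz : z ∈ closedBall y φ.rOut
  · rw [indicator_of_mem hz, enorm_mul]
    gcongr
    refine mul_le_of_le_one_right' ?_
    simpa [Real.enorm_eq_ofReal_abs, abs_of_nonneg φ.nonneg] using φ.le_one
  · rw [φ.zero_of_le_dist (not_le.1 hz).le, mul_zero, enorm_zero, ENNReal.zero_rpow_of_pos hp]
    exact zero_le

section BumpSeries

variable {ι E : Type*} [NormedAddCommGroup E] [NormedSpace ℝ E] [HasContDiffBump E]
  {x : ι → E} (φ : ∀ i, ContDiffBump (x i)) (c : ι → ℝ) {ε : ℝ}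

/-- Under the separation hypotheses of the lemmas below at most one term is nonzero at each point,
so the junk value of `finsum` never occurs. -/
def bumpSeries (z : E) : ℝ := ∑ᶠ i, c i * φ i z

variable {φ}

lemma contDiff_bumpSeries (hε : 0 < ε) (hx : Pairwise (Disjoint on fun i => ball (x i) ε))
    (hφ : ∀ i, (φ i).rOut ≤ ε / 2) {k : ℕ∞} : ContDiff ℝ k (bumpSeries φ c) := by
  have hlf : LocallyFinite fun i => Function.support fun z => c i * φ i z :=
    (locallyFinite_ball_half_of_pairwise_disjoint hε hx).subset fun i =>
      (Function.support_mul_subset_right _ _).trans <|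
        (φ i).support_eq.trans_subset (ball_subset_ball (hφ i))
  refine contDiff_iff_contDiffAt.2 fun z => ?_
  obtain ⟨s, hs⟩ := finsum_eventually_eq_sum hlf z
  exact (ContDiffAt.sum fun i _ => (contDiff_const.mul (φ i).contDiff).contDiffAt)
    |>.congr_of_eventuallyEq hs

lemma bumpSeries_eq_of_mem_ball (hx : Pairwise (Disjoint on fun i => ball (x i) ε))
    (hφ : ∀ i, (φ i).rOut ≤ ε) {i : ι} {z : E} (hz : z ∈ ball (x i) ε) :
    bumpSeries φ c z = c i * φ i z := by
  refine finsum_eq_single _ i fun j hji => ?_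
  have hzj : z ∉ ball (x j) ε := Set.disjoint_right.1 (hx hji) hz
  rw [(φ j).zero_of_le_dist ((hφ j).trans (not_lt.1 hzj)), mul_zero]

lemma bumpSeries_apply_center (hx : Pairwise (Disjoint on fun i => ball (x i) ε))
    (hφ : ∀ i, (φ i).rOut ≤ ε) (i : ι) : bumpSeries φ c (x i) = c i := by
  rw [bumpSeries_eq_of_mem_ball c hx hφ (mem_ball_self ((φ i).rOut_pos.trans_le (hφ i))),
    (φ i).one_of_mem_closedBall (mem_closedBall_self (φ i).rIn_pos.le), mul_one]

lemma enorm_bumpSeries_rpow_le (hx : Pairwise (Disjoint on fun i => ball (x i) ε))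
    (hφ : ∀ i, (φ i).rOut ≤ ε) {p : ℝ} (hp : 0 < p) (z : E) :
    ‖bumpSeries φ c z‖ₑ ^ p ≤
      ∑' i, (closedBall (x i) (φ i).rOut).indicator (fun _ => ‖c i‖ₑ ^ p) z := by
  by_cases hz : ∃ i, z ∈ ball (x i) ε
  · obtain ⟨i, hi⟩ := hz
    rw [bumpSeries_eq_of_mem_ball c hx hφ hi]
    exact (enorm_mul_contDiffBump_rpow_le (φ i) (c i) hp z).trans (ENNReal.le_tsum i)
  · push Not at hz
    have hzero : bumpSeries φ c z = 0 := finsum_eq_zero_of_forall_eq_zero fun i => by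
      rw [(φ i).zero_of_le_dist ((hφ i).trans (not_lt.1 (hz i))), mul_zero]
    rw [hzero, enorm_zero, ENNReal.zero_rpow_of_pos hp]
    exact zero_le

variable [MeasurableSpace E] [OpensMeasurableSpace E] [Countable ι] (μ : Measure E)

lemma lintegral_enorm_bumpSeries_rpow_le (hx : Pairwise (Disjoint on fun i => ball (x i) ε))
    (hφ : ∀ i, (φ i).rOut ≤ ε) {p : ℝ} (hp : 0 < p) :
    ∫⁻ z, ‖bumpSeries φ c z‖ₑ ^ p ∂μ ≤ ∑' i, ‖c i‖ₑ ^ p * μ (closedBall (x i) (φ i).rOut) :=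
  calc ∫⁻ z, ‖bumpSeries φ c z‖ₑ ^ p ∂μ
      ≤ ∫⁻ z, ∑' i, (closedBall (x i) (φ i).rOut).indicator (fun _ => ‖c i‖ₑ ^ p) z ∂μ :=
        lintegral_mono (enorm_bumpSeries_rpow_le c hx hφ hp)
    _ = ∑' i, ∫⁻ z, (closedBall (x i) (φ i).rOut).indicator (fun _ => ‖c i‖ₑ ^ p) z ∂μ :=
        lintegral_tsum fun _ => (measurable_const.indicator measurableSet_closedBall).aemeasurable
    _ = ∑' i, ‖c i‖ₑ ^ p * μ (closedBall (x i) (φ i).rOut) :=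
        tsum_congr fun _ => lintegral_indicator_const measurableSet_closedBall _

lemma memLp_bumpSeries (hε : 0 < ε) (hx : Pairwise (Disjoint on fun i => ball (x i) ε))
    (hφ : ∀ i, (φ i).rOut ≤ ε / 2) {p : ℝ≥0∞} (hp : p ≠ ∞)
    (hsum : ∑' i, ‖c i‖ₑ ^ p.toReal * μ (closedBall (x i) (φ i).rOut) ≠ ∞) :
    MemLp (bumpSeries φ c) p μ := by
  have hmeas : AEStronglyMeasurable (bumpSeries φ c) μ :=
    (contDiff_bumpSeries c hε hx hφ (k := 0)).continuous.aestronglyMeasurable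
  rcases eq_or_ne p 0 with rfl | hp0
  · exact memLp_zero_iff_aestronglyMeasurable.2 hmeas
  · have hφ' (i : ι) : (φ i).rOut ≤ ε := (hφ i).trans (half_le_self hε.le)
    exact ⟨hmeas, (eLpNorm_lt_top_iff_lintegral_rpow_enorm_lt_top hp0 hp).2 <|
      (lintegral_enorm_bumpSeries_rpow_le c μ hx hφ' (ENNReal.toReal_pos hp0 hp)).trans_lt
        hsum.lt_top⟩

end BumpSeries

lemma exists_contDiffBump_measure_closedBall_lt {E : Type*} [NormedAddCommGroup E]
    [NormedSpace ℝ E] [HasContDiffBump E] [MeasurableSpace E] [OpensMeasurableSpace E]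
    (μ : Measure E) [IsLocallyFiniteMeasure μ] [NullSingletonClass μ] (x : E) {ρ : ℝ} (hρ : 0 < ρ)
    {δ : ℝ≥0∞} (hδ : 0 < δ) : ∃ φ : ContDiffBump x, φ.rOut ≤ ρ ∧ μ (closedBall x φ.rOut) < δ := by
  have hfin : ∃ R > 0, μ (cthickening R {x}) ≠ ∞ := by
    obtain ⟨R, hR, hfin⟩ := (μ.finiteAt_nhds x).exists_mem_basis nhds_basis_closedBall
    exact ⟨R, hR, cthickening_singleton x hR.le ▸ hfin.ne⟩
  have hsmall : ∀ᶠ r in 𝓝 (0 : ℝ), μ (cthickening r {x}) < δ := by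
    have := tendsto_measure_cthickening hfin
    rw [closure_singleton, measure_singleton] at this
    exact this.eventually (gt_mem_nhds hδ)
  obtain ⟨r, hr_small, hr_pos, hr_le⟩ :=
    ((hsmall.filter_mono nhdsWithin_le_nhds).and (Ioc_mem_nhdsGT hρ)).exists
  exact ⟨⟨r / 2, r, half_pos hr_pos, half_lt_self hr_pos⟩, hr_le,
    (measure_mono (closedBall_subset_cthickening_singleton x r)).trans_lt hr_small⟩

theorem exists_contDiff_forall_memLp_apply_eq {E : Type*} [NormedAddCommGroup E]
    [NormedSpace ℝ E] [HasContDiffBump E] [MeasurableSpace E] [OpensMeasurableSpace E]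
    (μ : Measure E) [IsLocallyFiniteMeasure μ] [NullSingletonClass μ] {x : ℕ → E} {ε : ℝ}
    (hε : 0 < ε) (hx : Pairwise (Disjoint on fun n => ball (x n) ε)) (c : ℕ → ℝ) :
    ∃ w : E → ℝ, ContDiff ℝ (⊤ : ℕ∞) w ∧ (∀ p, p ≠ ∞ → MemLp w p μ) ∧ ∀ n, w (x n) = c n := by
  set a : ℕ → ℝ≥0∞ := fun n => ‖c n‖ₑ + 1
  have ha_top (n : ℕ) : a n ≠ ∞ := ENNReal.add_ne_top.2 ⟨enorm_ne_top, ENNReal.one_ne_top⟩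
  have hδ (n : ℕ) : 0 < 2⁻¹ ^ n / a n ^ n :=
    ENNReal.div_pos (pow_ne_zero _ (ENNReal.inv_ne_zero.2 ENNReal.ofNat_ne_top))
      (ENNReal.pow_ne_top (ha_top n))
  choose φ hφε hφμ using fun n =>
    exists_contDiffBump_measure_closedBall_lt μ (x n) (half_pos hε) (hδ n)
  refine ⟨bumpSeries φ c, contDiff_bumpSeries c hε hx hφε,
    fun p hp => memLp_bumpSeries c μ hε hx hφε hp ?_,
    bumpSeries_apply_center c hx fun n => (hφε n).trans (half_le_self hε.le)⟩
  have hgeom : ∑' n : ℕ, (2⁻¹ : ℝ≥0∞) ^ n ≠ ∞ := by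
    rw [ENNReal.tsum_geometric, ENNReal.one_sub_inv_two, inv_inv]
    exact ENNReal.ofNat_ne_top
  have hsum : ∑' n, a n ^ p.toReal * μ (closedBall (x n) (φ n).rOut) ≠ ∞ :=
    tsum_rpow_mul_ne_top (fun n => le_add_self) ha_top
      (fun n => ENNReal.mul_le_of_le_div' (hφμ n).le) hgeom ENNReal.toReal_nonneg
  exact ne_top_of_le_ne_top hsum (ENNReal.tsum_le_tsum fun n => by gcongr; exact le_self_add)

theorem exists_smooth_integrable_with_growth_general (N : ℕ) (A : Set (RN N))
    (hA : ¬ Bornology.IsBounded A) (α : ℝ → ℝ)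
    (hα_ge : ∀ x ∈ Set.Ici (0 : ℝ), 1 ≤ α x) :
    ∃ w : RN N → ℝ, w ∈ SmoothIntegrable N ∧ HasGrowth A α w := by
  -- so that `volume` has no atoms
  have : Nontrivial (RN N) := not_subsingleton_iff_nontrivial.1 fun _ =>
    hA Set.subsingleton_of_subsingleton.finite.isBounded
  obtain ⟨x, hxA, hx_sep, hx_tendsto⟩ := exists_seq_mem_pairwise_lt_dist_tendsto_norm hA two_pos
  obtain ⟨w, hw_smooth, hw_memLp, hw_x⟩ := exists_contDiff_forall_memLp_apply_eq volume one_pos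
    (hx_sep.mono fun m n h => ball_disjoint_ball (by linarith)) fun n => (n + 1) * α ‖x n‖
  refine ⟨w, ⟨hw_smooth, fun p _ => hw_memLp _ ENNReal.ofReal_ne_top⟩, fun C _ R _ => ?_⟩
  obtain ⟨n, hRn, hCn⟩ :=
    ((hx_tendsto.eventually_gt_atTop R).and (eventually_gt_atTop ⌈C⌉₊)).exists
  have hα_pos : 0 < α ‖x n‖ := one_pos.trans_le (hα_ge _ (norm_nonneg _))
  have hC : C < n + 1 := (Nat.le_ceil C).trans_lt (by exact_mod_cast hCn.trans (Nat.lt_succ_self n))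
  refine ⟨x n, hxA n, hRn, ?_⟩
  rw [hw_x, abs_of_pos (by positivity)]
  exact mul_lt_mul_of_pos_right hC hα_pos

/-- For any not relatively compact `A ⊆ ℝ^N` and any continuous
increasing `α : [0,∞) → [1,∞)` there is a smooth function, `p`-integrable for all
`p ∈ [1,∞)`, which has growth `α` through `A`. -/
theorem exists_smooth_integrable_with_growth (N : ℕ) (hN : 1 ≤ N)
    (A : Set (RN N)) (hA : ¬ Bornology.IsBounded A)
    (α : ℝ → ℝ) (hα_cont : ContinuousOn α (Set.Ici 0))
    (hα_mono : MonotoneOn α (Set.Ici 0))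
    (hα_ge : ∀ x ∈ Set.Ici (0 : ℝ), 1 ≤ α x) :
    ∃ w : RN N → ℝ, w ∈ SmoothIntegrable N ∧ HasGrowth A α w :=
  exists_smooth_integrable_with_growth_general N A hA α hα_ge

end
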